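/- arXiv:2402.04785 — 2 statements merged into one kernel-verified Lean document; each statement's English description precedes it below -/
import Mathlib

section
/- For all c ≥ 1, t*(cω, c·σ²/ε, [h_i, τ_i]) ≤ c · t*(ω, σ²/ε, [h_i, τ_i]), where t* is the equilibrium time. -/
open Finset
open scoped ENNReal

/-- The pairs `(h i, τ i)`, reindexed via the permutation `π`, are sorted
in nondecreasing order of `max (h i) (τ i)`. -/
def SortsPairs {n : ℕ} (h τ : Fin n → ℝ≥0∞) (π : Equiv.Perm (Fin n)) : Prop :=
  Monotone fun i => max (h (π i)) (τ (π i))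

/-- `s` solves the defining equation of the equilibrium time for the prefix `{0, …, j}`:
`(∑_{i ≤ j} (2 τ_{π i} ω + 4 τ_{π i} h_{π i} r ω / s + 2 h_{π i} r)⁻¹)⁻¹ = s`,
where `r = σ²/ε` and arithmetic is in `ℝ≥0∞` (so `1/0 = ∞`). -/
def SolvesEquil {n : ℕ} (w r : ℝ≥0∞) (h τ : Fin n → ℝ≥0∞)
    (π : Equiv.Perm (Fin n)) (j : Fin n) (s : ℝ≥0∞) : Prop :=
  (∑ i ∈ Finset.Iic j,
      (2 * τ (π i) * w + 4 * τ (π i) * h (π i) * r * w / s + 2 * h (π i) * r)⁻¹)⁻¹ = s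

/-- The value `min_j max{max{h_{π j}, τ_{π j}}, s j}` of the equilibrium time,
given the sorting permutation `π` and the solutions `s j` of the defining equations. -/
noncomputable def tstarVal {n : ℕ} (h τ : Fin n → ℝ≥0∞) (π : Equiv.Perm (Fin n))
    (s : Fin n → ℝ≥0∞) : ℝ≥0∞ :=
  ⨅ j, max (max (h (π j)) (τ (π j))) (s j)

/-!
Scaling `ω` and `σ²/ε` by `c` scales every summand of the defining equation by `c` once `s` is
scaled by `c` as well, and a harmonic sum is homogeneous; so `c · s*(j)` solves the scaled
equation. Its right-hand side is antitone in `s`, hence its solution is unique and the scaled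
equilibrium times are `s*_c(j) = c · s*(j)`. Finally `max a (c s) ≤ c · max a s` for `c ≥ 1`.
-/

theorem Function.IsFixedPt.eq_of_antitone {α : Type*} [LinearOrder α] {f : α → α}
    (hf : Antitone f) {a b : α} (ha : Function.IsFixedPt f a) (hb : Function.IsFixedPt f b) :
    a = b := by
  rcases le_total a b with hab | hba
  · refine le_antisymm hab ?_
    calc b = f b := hb.symm
      _ ≤ f a := hf hab
      _ = a := ha
  · refine le_antisymm ?_ hba
    calc a = f a := ha.symm
      _ ≤ f b := hf hba
      _ = b := hb

theorem ENNReal.inv_sum_inv_mul {ι : Type*} (t : Finset ι) (f : ι → ℝ≥0∞) {c : ℝ≥0∞}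
    (hc0 : c ≠ 0) (hc : c ≠ ∞) :
    (∑ i ∈ t, (c * f i)⁻¹)⁻¹ = c * (∑ i ∈ t, (f i)⁻¹)⁻¹ := by
  simp only [ENNReal.mul_inv (Or.inl hc0) (Or.inl hc), ← Finset.mul_sum]
  rw [ENNReal.mul_inv (Or.inl (ENNReal.inv_ne_zero.2 hc)) (Or.inl (ENNReal.inv_ne_top.2 hc0)),
    inv_inv]

section EquilibriumEquation

variable {n : ℕ} (w r : ℝ≥0∞) (h τ : Fin n → ℝ≥0∞) (π : Equiv.Perm (Fin n)) (j : Fin n)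

noncomputable def equilMap (s : ℝ≥0∞) : ℝ≥0∞ :=
  (∑ i ∈ Iic j, (2 * τ (π i) * w + 4 * τ (π i) * h (π i) * r * w / s + 2 * h (π i) * r)⁻¹)⁻¹

theorem solvesEquil_iff_isFixedPt {s : ℝ≥0∞} :
    SolvesEquil w r h τ π j s ↔ Function.IsFixedPt (equilMap w r h τ π j) s :=
  Iff.rfl

theorem antitone_equilMap : Antitone (equilMap w r h τ π j) := fun _ _ hab =>
  ENNReal.inv_le_inv.2 (sum_le_sum fun _ _ => ENNReal.inv_le_inv.2 (by gcongr))

theorem equilMap_mul {c : ℝ≥0∞} (hc0 : c ≠ 0) (hc : c ≠ ∞) (s : ℝ≥0∞) :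
    equilMap (c * w) (c * r) h τ π j (c * s) = c * equilMap w r h τ π j s := by
  have summand_mul : ∀ a b : ℝ≥0∞, 2 * a * (c * w) + 4 * a * b * (c * r) * (c * w) / (c * s)
      + 2 * b * (c * r) = c * (2 * a * w + 4 * a * b * r * w / s + 2 * b * r) := by
    intro a b
    rw [show 4 * a * b * (c * r) * (c * w) = c * (c * (4 * a * b * r * w)) by ring,
      mul_div_assoc, ENNReal.mul_div_mul_left _ _ hc0 hc]
    ring
  simp only [equilMap, summand_mul]
  exact ENNReal.inv_sum_inv_mul _ _ hc0 hc

variable {w r h τ π j}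

theorem SolvesEquil.unique {s₁ s₂ : ℝ≥0∞} (h₁ : SolvesEquil w r h τ π j s₁)
    (h₂ : SolvesEquil w r h τ π j s₂) : s₁ = s₂ :=
  Function.IsFixedPt.eq_of_antitone (antitone_equilMap w r h τ π j) h₁ h₂

theorem SolvesEquil.mul {c s : ℝ≥0∞} (hs : SolvesEquil w r h τ π j s) (hc0 : c ≠ 0)
    (hc : c ≠ ∞) : SolvesEquil (c * w) (c * r) h τ π j (c * s) := by
  rw [solvesEquil_iff_isFixedPt] at hs ⊢
  rw [Function.IsFixedPt, equilMap_mul w r h τ π j hc0 hc, hs]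

end EquilibriumEquation

theorem tstarVal_mul_le {n : ℕ} (h τ : Fin n → ℝ≥0∞) (π : Equiv.Perm (Fin n))
    (s : Fin n → ℝ≥0∞) {c : ℝ≥0∞} (hc1 : 1 ≤ c) (hc : c ≠ ∞) :
    tstarVal h τ π (fun j => c * s j) ≤ c * tstarVal h τ π s := by
  rw [tstarVal, tstarVal, ENNReal.mul_iInf_of_ne (one_pos.trans_le hc1).ne' hc]
  refine iInf_mono fun j => ?_
  rw [mul_max]
  exact max_le_max (le_mul_of_one_le_left zero_le hc1) le_rfl

theorem equilibrium_time_scale_upper_general (n : ℕ)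
    (c w r : ℝ≥0∞) (hc1 : 1 ≤ c) (hc : c ≠ ⊤)
    (h τ : Fin n → ℝ≥0∞) (π : Equiv.Perm (Fin n))
    (s sc : Fin n → ℝ≥0∞)
    (hs : ∀ j, SolvesEquil w r h τ π j (s j))
    (hsc : ∀ j, SolvesEquil (c * w) (c * r) h τ π j (sc j)) :
    tstarVal h τ π sc ≤ c * tstarVal h τ π s := by
  have hc0 : c ≠ 0 := (one_pos.trans_le hc1).ne'
  have scaled_solution : sc = fun j => c * s j :=
    funext fun j => (hsc j).unique ((hs j).mul hc0 hc)
  rw [scaled_solution]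
  exact tstarVal_mul_le h τ π s hc1 hc

/-- For `c ≥ 1`, `t*(cω, c·σ²/ε, [h_i, τ_i]) ≤ c · t*(ω, σ²/ε, [h_i, τ_i])`. -/
theorem equilibrium_time_scale_upper (n : ℕ) (hn : 0 < n)
    (c w r : ℝ≥0∞) (hc1 : 1 ≤ c) (hc : c ≠ ⊤)
    (h τ : Fin n → ℝ≥0∞) (π : Equiv.Perm (Fin n)) (hπ : SortsPairs h τ π)
    (s sc : Fin n → ℝ≥0∞)
    (hs : ∀ j, SolvesEquil w r h τ π j (s j))
    (hsc : ∀ j, SolvesEquil (c * w) (c * r) h τ π j (sc j)) :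
    tstarVal h τ π sc ≤ c * tstarVal h τ π s :=
  equilibrium_time_scale_upper_general n c w r hc1 hc h τ π s sc hs hsc
end

section
/- If max{h_i, τ_i} = ∞ for all i > p (with 1 ≤ p ≤ n), then t*(ω, σ²/ε, [h_i, τ_i]_{i=1}^n) = t*(ω, σ²/ε, [h_i, τ_i]_{i=1}^p): workers with infinite processing time do not affect the equilibrium time. -/
open Finset
open scoped ENNReal

/-!
Every summand of the defining equation increases with `t`, so the solution of the equation over
a set of workers is antitone in that set, and in particular unique. For a threshold `c`, the
longest sorted prefix whose workers have `max{h_i, τ_i} ≤ c` is the set of all such workers,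
whatever the sorting, and its solution is the smallest among the prefixes below `c`. Hence `t*`
is the infimum over the thresholds `c = max{h_i, τ_i}` of `max{c, t_c}`, with `t_c` the solution
over `{i | max{h_i, τ_i} ≤ c}`. Workers with `max{h_i, τ_i} = ∞` contribute `∞` to this infimum
and never lie below a finite threshold.
-/

noncomputable def equilTerm (w r hv tv t : ℝ≥0∞) : ℝ≥0∞ :=
  (2 * tv * w + 4 * tv * hv * r * w / t + 2 * hv * r)⁻¹

lemma equilTerm_mono (w r hv tv : ℝ≥0∞) : Monotone (equilTerm w r hv tv) := by
  intro a b hab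
  rw [equilTerm, equilTerm, ENNReal.inv_le_inv]
  gcongr

section SolvesEquilOn

variable {ι κ : Type*} (w r : ℝ≥0∞) (h τ : ι → ℝ≥0∞)

def SolvesEquilOn (S : Finset ι) (t : ℝ≥0∞) : Prop :=
  (∑ i ∈ S, equilTerm w r (h i) (τ i) t)⁻¹ = t

variable {w r h τ}

theorem SolvesEquilOn.le_of_subset {A B : Finset ι} {a b : ℝ≥0∞} (ha : SolvesEquilOn w r h τ A a)
    (hb : SolvesEquilOn w r h τ B b) (hAB : A ⊆ B) : b ≤ a := by
  by_contra! hab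
  have : a⁻¹ ≤ b⁻¹ := by
    rw [← ha, ← hb, inv_inv, inv_inv]
    calc ∑ i ∈ A, equilTerm w r (h i) (τ i) a
        ≤ ∑ i ∈ A, equilTerm w r (h i) (τ i) b :=
          sum_le_sum fun i _ => equilTerm_mono w r (h i) (τ i) hab.le
      _ ≤ ∑ i ∈ B, equilTerm w r (h i) (τ i) b := sum_le_sum_of_subset hAB
  exact hab.not_ge (ENNReal.inv_le_inv.mp this)

theorem SolvesEquilOn.unique {S : Finset ι} {a b : ℝ≥0∞} (ha : SolvesEquilOn w r h τ S a)
    (hb : SolvesEquilOn w r h τ S b) : a = b :=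
  le_antisymm (hb.le_of_subset ha subset_rfl) (ha.le_of_subset hb subset_rfl)

theorem solvesEquilOn_map (e : κ ↪ ι) (S : Finset κ) (t : ℝ≥0∞) :
    SolvesEquilOn w r h τ (S.map e) t ↔ SolvesEquilOn w r (h ∘ e) (τ ∘ e) S t := by
  rw [SolvesEquilOn, SolvesEquilOn, sum_map]
  rfl

end SolvesEquilOn

theorem Finset.filter_univ_eq_map {ι κ : Type*} [Fintype ι] [Fintype κ] {P : ι → Prop}
    [DecidablePred P] (e : κ ↪ ι) (hP : ∀ i, P i → i ∈ Set.range e) :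
    univ.filter P = (univ.filter (P ∘ e)).map e := by
  rw [← filter_map]
  ext i
  simp only [mem_filter, mem_map, mem_univ, true_and]
  exact ⟨fun hi => ⟨hP i hi, hi⟩, And.right⟩

theorem Monotone.exists_Iic_eq_filter_le {ι α : Type*} [LinearOrder ι] [Fintype ι]
    [LocallyFiniteOrderBot ι] [LinearOrder α] {f : ι → α} (hf : Monotone f) {j : ι} {c : α}
    (hj : f j ≤ c) : ∃ k, j ≤ k ∧ Iic k = univ.filter fun i => f i ≤ c := by
  have hne : (univ.filter fun i => f i ≤ c).Nonempty := ⟨j, by simpa using hj⟩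
  set k := (univ.filter fun i => f i ≤ c).max' hne
  have hk : f k ≤ c := by simpa using max'_mem _ hne
  refine ⟨k, le_max' _ j (by simpa using hj), ?_⟩
  ext i
  simp only [mem_Iic, mem_filter, mem_univ, true_and]
  exact ⟨fun hik => (hf hik).trans hk, fun hi => le_max' _ i (by simpa using hi)⟩

/-- Order-free form of `tstarVal`: the infimum, over the thresholds `c = max{h_i, τ_i}`, of
`max{c, t}` with `t` a solution of the equation for the workers below the threshold. -/
noncomputable def equilibriumTime {ι : Type*} [Fintype ι] (w r : ℝ≥0∞) (h τ : ι → ℝ≥0∞) :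
    ℝ≥0∞ :=
  ⨅ (i) (t) (_ : SolvesEquilOn w r h τ (univ.filter fun k => max (h k) (τ k) ≤ max (h i) (τ i)) t),
    max (max (h i) (τ i)) t

section SortedPrefix

variable {n : ℕ} {w r : ℝ≥0∞} {h τ : Fin n → ℝ≥0∞} {π : Equiv.Perm (Fin n)} {s : Fin n → ℝ≥0∞}

theorem solvesEquil_iff_solvesEquilOn {j : Fin n} {t : ℝ≥0∞} :
    SolvesEquil w r h τ π j t ↔ SolvesEquilOn w r h τ ((Iic j).map π.toEmbedding) t :=
  (solvesEquilOn_map π.toEmbedding (Iic j) t).symm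

theorem SortsPairs.exists_solvesEquilOn_filter (hπ : SortsPairs h τ π)
    (hs : ∀ j, SolvesEquil w r h τ π j (s j)) (j : Fin n) :
    ∃ k, max (h (π k)) (τ (π k)) ≤ max (h (π j)) (τ (π j)) ∧ s k ≤ s j ∧
      SolvesEquilOn w r h τ (univ.filter fun i => max (h i) (τ i) ≤ max (h (π j)) (τ (π j)))
        (s k) := by
  obtain ⟨k, hjk, hk⟩ := hπ.exists_Iic_eq_filter_le (j := j) le_rfl
  have hprefix : (Iic k).map π.toEmbedding =
      univ.filter fun i => max (h i) (τ i) ≤ max (h (π j)) (τ (π j)) := by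
    rw [hk]
    conv_rhs => rw [filter_univ_eq_map π.toEmbedding fun i _ => ⟨π.symm i, π.apply_symm_apply i⟩]
    rfl
  have hsk := solvesEquil_iff_solvesEquilOn.mp (hs k)
  have hkj : max (h (π k)) (τ (π k)) ≤ max (h (π j)) (τ (π j)) := by
    have hmem : k ∈ Iic k := mem_Iic.mpr le_rfl
    rw [hk, mem_filter] at hmem
    exact hmem.2
  refine ⟨k, hkj, ?_, hprefix ▸ hsk⟩
  exact (solvesEquil_iff_solvesEquilOn.mp (hs j)).le_of_subset hsk
    (map_subset_map.mpr (Iic_subset_Iic.mpr hjk))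

theorem tstarVal_eq_equilibriumTime (hπ : SortsPairs h τ π)
    (hs : ∀ j, SolvesEquil w r h τ π j (s j)) :
    tstarVal h τ π s = equilibriumTime w r h τ := by
  apply le_antisymm
  · refine le_iInf fun i => le_iInf₂ fun t ht => ?_
    obtain ⟨k, hk, -, hsk⟩ := hπ.exists_solvesEquilOn_filter hs (π.symm i)
    rw [π.apply_symm_apply] at hk hsk
    rw [← hsk.unique ht]
    exact iInf_le_of_le k (max_le_max hk le_rfl)
  · refine le_iInf fun j => ?_
    obtain ⟨k, -, hkj, hsk⟩ := hπ.exists_solvesEquilOn_filter hs j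
    exact iInf_le_of_le (π j) (iInf₂_le_of_le (s k) hsk (max_le_max le_rfl hkj))

end SortedPrefix

theorem equilibriumTime_comp_embedding {ι κ : Type*} [Fintype ι] [Fintype κ] (w r : ℝ≥0∞)
    {h τ : ι → ℝ≥0∞} (e : κ ↪ ι) (hfin : ∀ i, max (h i) (τ i) ≠ ⊤ → i ∈ Set.range e) :
    equilibriumTime w r (h ∘ e) (τ ∘ e) = equilibriumTime w r h τ := by
  have hsolves : ∀ {c t : ℝ≥0∞}, c ≠ ⊤ →
      (SolvesEquilOn w r h τ (univ.filter fun i => max (h i) (τ i) ≤ c) t ↔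
        SolvesEquilOn w r (h ∘ e) (τ ∘ e) (univ.filter fun k => max (h (e k)) (τ (e k)) ≤ c) t) :=
    fun hc => by
      rw [filter_univ_eq_map e fun i hi => hfin i (ne_top_of_le_ne_top hc hi)]
      exact solvesEquilOn_map e _ _
  apply le_antisymm
  · refine le_iInf fun i => le_iInf₂ fun t ht => ?_
    by_cases hi : max (h i) (τ i) = ⊤
    · simp [hi]
    obtain ⟨k, rfl⟩ := hfin i hi
    exact iInf_le_of_le k (iInf₂_le_of_le t ((hsolves hi).mp ht) le_rfl)
  · refine le_iInf fun k => le_iInf₂ fun t ht => ?_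
    by_cases hk : max (h (e k)) (τ (e k)) = ⊤
    · simp [hk]
    exact iInf_le_of_le (e k) (iInf₂_le_of_le t ((hsolves hk).mpr ht) le_rfl)

theorem equilibrium_time_partial_participation_general (n p : ℕ) (hpn : p ≤ n)
    (w r : ℝ≥0∞) (h τ : Fin n → ℝ≥0∞)
    (hslow : ∀ i : Fin n, p ≤ (i : ℕ) → max (h i) (τ i) = ⊤)
    (π : Equiv.Perm (Fin n)) (hπ : SortsPairs h τ π)
    (ρ : Equiv.Perm (Fin p))
    (hρ : SortsPairs (fun i : Fin p => h (Fin.castLE hpn i))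
      (fun i : Fin p => τ (Fin.castLE hpn i)) ρ)
    (s : Fin n → ℝ≥0∞) (s' : Fin p → ℝ≥0∞)
    (hs : ∀ j, SolvesEquil w r h τ π j (s j))
    (hs' : ∀ j, SolvesEquil w r (fun i : Fin p => h (Fin.castLE hpn i))
      (fun i : Fin p => τ (Fin.castLE hpn i)) ρ j (s' j)) :
    tstarVal h τ π s =
      tstarVal (fun i : Fin p => h (Fin.castLE hpn i))
        (fun i : Fin p => τ (Fin.castLE hpn i)) ρ s' := by
  rw [tstarVal_eq_equilibriumTime hπ hs, tstarVal_eq_equilibriumTime hρ hs']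
  refine (equilibriumTime_comp_embedding w r (Fin.castLEEmb hpn) fun i hi => ?_).symm
  exact ⟨⟨i, lt_of_not_ge fun hpi => hi (hslow i hpi)⟩, rfl⟩

/-- Partial participation: workers `i` with index `≥ p` having `max{h_i, τ_i} = ∞`
do not affect the equilibrium time, which equals the equilibrium time of the first
`p` workers. -/
theorem equilibrium_time_partial_participation (n p : ℕ) (hp1 : 1 ≤ p) (hpn : p ≤ n)
    (w r : ℝ≥0∞) (h τ : Fin n → ℝ≥0∞)
    (hslow : ∀ i : Fin n, p ≤ (i : ℕ) → max (h i) (τ i) = ⊤)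
    (π : Equiv.Perm (Fin n)) (hπ : SortsPairs h τ π)
    (ρ : Equiv.Perm (Fin p))
    (hρ : SortsPairs (fun i : Fin p => h (Fin.castLE hpn i))
      (fun i : Fin p => τ (Fin.castLE hpn i)) ρ)
    (s : Fin n → ℝ≥0∞) (s' : Fin p → ℝ≥0∞)
    (hs : ∀ j, SolvesEquil w r h τ π j (s j))
    (hs' : ∀ j, SolvesEquil w r (fun i : Fin p => h (Fin.castLE hpn i))
      (fun i : Fin p => τ (Fin.castLE hpn i)) ρ j (s' j)) :
    tstarVal h τ π s =
      tstarVal (fun i : Fin p => h (Fin.castLE hpn i))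
        (fun i : Fin p => τ (Fin.castLE hpn i)) ρ s' :=
  equilibrium_time_partial_participation_general n p hpn w r h τ hslow π hπ ρ hρ s s' hs hs'
end
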